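/- Let n ≥ 1, let f_1, …, f_n : ℂ → ℂ be arbitrary functions, and let z_1, …, z_n ∈ ℂ be pairwise distinct. Define F_{i,1} := f_i and, recursively for 2 ≤ j ≤ n, F_{i,j}(w) := (F_{i,j−1}(w) − F_{i,j−1}(z_{j−1})) / (w − z_{j−1}) for w ∉ {z_1, …, z_{j−1}}. Then det( f_i(z_j) )_{1≤i,j≤n} = ∏_{1≤i<j≤n} (z_j − z_i) · det( F_{i,j}(z_j) )_{1≤i,j≤n}. -/
import Mathlib

open scoped BigOperators

/-- The divided-difference sequence: `divDiffSeq f z j` is the function `F_{j+1}` (in the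
paper's 1-based notation) obtained from `f` by successive divided differences with respect
to the nodes `z 0, z 1, …, z (j-1)`. -/
noncomputable def divDiffSeq (f : ℂ → ℂ) (z : ℕ → ℂ) : ℕ → ℂ → ℂ
  | 0 => f
  | j + 1 => fun w => (divDiffSeq f z j w - divDiffSeq f z j (z j)) / (w - z j)

lemma newton_expansion (f : ℂ → ℂ) (z : ℕ → ℂ) (j : ℕ) (w : ℂ)
    (hw : ∀ l < j, w ≠ z l) :
    f w = (∑ k ∈ Finset.range j,
        divDiffSeq f z k (z k) * ∏ l ∈ Finset.range k, (w - z l)) +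
      divDiffSeq f z j w * ∏ l ∈ Finset.range j, (w - z l) := by
  induction j with
  | zero => simp [divDiffSeq]
  | succ j ih =>
    rw [ih (fun l hl => hw l (Nat.lt_succ_of_lt hl)), Finset.sum_range_succ,
      Finset.prod_range_succ]
    have hne : w - z j ≠ 0 := sub_ne_zero.mpr (hw j (Nat.lt_succ_self j))
    have h : divDiffSeq f z (j+1) w * (w - z j)
        = divDiffSeq f z j w - divDiffSeq f z j (z j) := by
      simp only [divDiffSeq]
      field_simp
    linear_combination -(∏ l ∈ Finset.range j, (w - z l)) * h


/-- the divided-difference factorization of the determinant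
`det(f_i(z_j))` from the proof of the paper's Lemma 2.12. -/
theorem det_eq_vandermonde_mul_det_divDiff (n : ℕ) (hn : 1 ≤ n)
    (f : Fin n → ℂ → ℂ) (z : ℕ → ℂ)
    (hz : ∀ i j : Fin n, i ≠ j → z (i : ℕ) ≠ z (j : ℕ)) :
    (Matrix.of fun i j : Fin n => f i (z (j : ℕ))).det =
      (∏ p ∈ Finset.univ.filter (fun p : Fin n × Fin n => p.1 < p.2),
          (z (p.2 : ℕ) - z (p.1 : ℕ))) *
        (Matrix.of fun i j : Fin n => divDiffSeq (f i) z (j : ℕ) (z (j : ℕ))).det := by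
  classical
  set D : Matrix (Fin n) (Fin n) ℂ :=
    Matrix.of fun i j : Fin n => divDiffSeq (f i) z (j : ℕ) (z (j : ℕ)) with hD
  set U : Matrix (Fin n) (Fin n) ℂ :=
    Matrix.of fun k j : Fin n =>
      if (k : ℕ) ≤ (j : ℕ) then ∏ l ∈ Finset.range (k : ℕ), (z (j : ℕ) - z l) else 0 with hU
  have hzj : ∀ (j : Fin n) (l : ℕ), l < (j : ℕ) → z (j : ℕ) ≠ z l := by
    intro j l hl
    have hlt : l < n := hl.trans j.isLt
    exact hz j ⟨l, hlt⟩ (by simp only [ne_eq, Fin.ext_iff]; omega)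
  -- Factorization M = D * U via the Newton expansion
  have hMDU : (Matrix.of fun i j : Fin n => f i (z (j : ℕ))) = D * U := by
    ext i j
    have step1 : (D * U) i j
        = ∑ k ∈ Finset.range n, (if k ≤ (j : ℕ) then
            divDiffSeq (f i) z k (z k) * ∏ l ∈ Finset.range k, (z (j : ℕ) - z l) else 0) := by
      rw [Matrix.mul_apply, ← Fin.sum_univ_eq_sum_range]
      refine Finset.sum_congr rfl fun k _ => ?_
      simp only [hD, hU, Matrix.of_apply, mul_ite, mul_zero]
    have step2 : Finset.filter (fun k => k ≤ (j : ℕ)) (Finset.range n)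
        = Finset.range ((j : ℕ) + 1) := by
      ext k
      simp only [Finset.mem_filter, Finset.mem_range]
      have := j.isLt
      omega
    rw [Matrix.of_apply, step1, ← Finset.sum_filter, step2, Finset.sum_range_succ]
    exact newton_expansion (f i) z (j : ℕ) (z (j : ℕ)) (fun l hl => hzj j l hl)
  -- U is upper triangular
  have hUtri : U.BlockTriangular id := by
    intro k j h
    simp only [id] at h
    simp only [hU, Matrix.of_apply]
    rw [if_neg (not_le.mpr (Fin.lt_iff_val_lt_val.mp h))]
  have hUdet : U.det = ∏ j : Fin n, ∏ l ∈ Finset.range (j : ℕ), (z (j : ℕ) - z l) := by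
    rw [Matrix.det_of_upperTriangular hUtri]
    refine Finset.prod_congr rfl fun j _ => ?_
    simp [hU]
  -- the Vandermonde-type product identity
  have inner : ∀ j : Fin n,
      (∏ i ∈ Finset.univ.filter (fun i : Fin n => i < j), (z (j : ℕ) - z (i : ℕ)))
        = ∏ l ∈ Finset.range (j : ℕ), (z (j : ℕ) - z l) := by
    intro j
    refine Finset.prod_nbij' (fun i : Fin n => (i : ℕ))
      (fun l => if h : l < n then (⟨l, h⟩ : Fin n) else ⟨0, hn⟩) ?_ ?_ ?_ ?_ ?_
    · intro a ha
      simp only [Finset.mem_filter, Finset.mem_univ, true_and] at ha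
      simpa [Finset.mem_range] using (Fin.lt_iff_val_lt_val.mp ha)
    · intro l hl
      simp only [Finset.mem_range] at hl
      have h1 : l < n := hl.trans j.isLt
      simp only [dif_pos h1, Finset.mem_filter, Finset.mem_univ, true_and]
      exact Fin.lt_iff_val_lt_val.mpr hl
    · intro a ha
      simp [a.isLt]
    · intro l hl
      simp only [Finset.mem_range] at hl
      have h1 : l < n := hl.trans j.isLt
      simp [h1]
    · intro a ha; rfl
  have hsig : (∏ j : Fin n, ∏ i ∈ Finset.univ.filter (fun i : Fin n => i < j),
        (z (j : ℕ) - z (i : ℕ)))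
      = ∏ x ∈ (Finset.univ : Finset (Fin n)).sigma
          (fun j => Finset.univ.filter (fun i : Fin n => i < j)),
        (z (x.1 : ℕ) - z (x.2 : ℕ)) :=
    Finset.prod_sigma' _ _ _
  have hpair : (∏ p ∈ Finset.univ.filter (fun p : Fin n × Fin n => p.1 < p.2),
          (z (p.2 : ℕ) - z (p.1 : ℕ)))
      = ∏ j : Fin n, ∏ l ∈ Finset.range (j : ℕ), (z (j : ℕ) - z l) := by
    rw [← Finset.prod_congr rfl (fun j _ => inner j), hsig]
    refine Finset.prod_nbij' (fun p : Fin n × Fin n => (⟨p.2, p.1⟩ : Σ _ : Fin n, Fin n))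
      (fun x => (x.2, x.1)) ?_ ?_ ?_ ?_ ?_
    · intro p hp
      simp only [Finset.mem_filter, Finset.mem_univ, true_and] at hp
      simp [Finset.mem_sigma, hp]
    · intro x hx
      simp only [Finset.mem_sigma, Finset.mem_univ, true_and, Finset.mem_filter] at hx
      simp [hx]
    · intro p hp; rfl
    · intro x hx; rfl
    · intro p hp; rfl
  rw [hMDU, Matrix.det_mul, hUdet, hpair]
  ring
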